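/- arXiv:2407.00427 — 4 statements merged into one kernel-verified Lean document; each statement's English description precedes it below -/
import Mathlib

section
/- Let F be a family of connected r-uniform hypergraphs and let m ≤ n be positive integers with n ≥ m + r. Then ex(m, F) ≤ (1 - ((n - m - r)/n)^r) · ex(n, F), where ex(k, F) denotes the maximum number of edges in an F-free r-graph on k vertices. -/
/-- `F` is contained in `H` as a subgraph (hypergraph copy). -/
def HContains (F : Finset (Finset ℕ)) {V : Type*} [DecidableEq V]
    (H : Finset (Finset V)) : Prop :=
  ∃ f : ℕ → V, Set.InjOn f ↑(F.sup id) ∧ ∀ e ∈ F, e.image f ∈ H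

/-- Turán number of a family of hypergraphs among `r`-uniform hypergraphs on `n` vertices. -/
noncomputable def exH (r : ℕ) (Fam : Set (Finset (Finset ℕ))) (n : ℕ) : ℕ :=
  sSup {k | ∃ H : Finset (Finset (Fin n)), (∀ e ∈ H, e.card = r) ∧
    (∀ F ∈ Fam, ¬ HContains F H) ∧ H.card = k}

/-- An `r`-graph is connected: any two vertices of its support are joined by a path
in the graph of pairs contained in a common edge. -/
def HConnected (F : Finset (Finset ℕ)) : Prop :=
  ∀ u ∈ F.sup id, ∀ v ∈ F.sup id,
    Relation.ReflTransGen (fun a b => ∃ e ∈ F, a ∈ e ∧ b ∈ e) u v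

/-!
Because every member of `Fam` is connected, the vertex-disjoint union of extremal `r`-graphs on
`m` and `n - m` vertices is still `Fam`-free, so `ex(m) + ex(n - m) ≤ ex(n)`. Deleting a vertex
of minimum degree from an extremal `r`-graph on `k + 1` vertices keeps at least a
`(k + 1 - r)/(k + 1)` fraction of its edges, hence `ex(k) / k.descFactorial r` is antitone in `k`
and `ex(n - m) ≥ ((n - m).descFactorial r / n.descFactorial r) ex(n) ≥ ((n - m - r)/n)^r ex(n)`.
-/

open Finset

section Hypergraph

variable {V W : Type*} [DecidableEq V] [DecidableEq W] {r : ℕ}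
  {Fam : Set (Finset (Finset ℕ))}

def HFree (r : ℕ) (Fam : Set (Finset (Finset ℕ))) (H : Finset (Finset V)) : Prop :=
  (∀ e ∈ H, #e = r) ∧ ∀ F ∈ Fam, ¬ HContains F H

theorem HContains.mono {F : Finset (Finset ℕ)} {H H' : Finset (Finset V)} (hHH' : H ⊆ H')
    (hF : HContains F H) : HContains F H' := by
  obtain ⟨f, hinj, hedges⟩ := hF
  exact ⟨f, hinj, fun e he => hHH' (hedges e he)⟩

theorem HFree.mono {H H' : Finset (Finset V)}
    (hH'H : H' ⊆ H) (hH : HFree r Fam H) : HFree r Fam H' :=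
  ⟨fun e he => hH.1 e (hH'H he), fun F hF hc => hH.2 F hF (hc.mono hH'H)⟩

theorem HFree.nonempty_of_mem {H : Finset (Finset V)}
    (hr : 1 ≤ r) (hH : HFree r Fam H) {e : Finset V} (he : e ∈ H) : e.Nonempty :=
  card_pos.mp (by rw [hH.1 e he]; exact hr)

theorem hContains_image_image_iff [Nonempty V] {ι : V → W} (hι : Function.Injective ι)
    {F : Finset (Finset ℕ)} {H : Finset (Finset V)} :
    HContains F (H.image (image ι)) ↔ HContains F H := by
  constructor
  · rintro ⟨f, hinj, hedges⟩
    have hrange : ∀ x ∈ F.sup id, ι (Function.invFun ι (f x)) = f x := by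
      intro x hx
      obtain ⟨e, heF, hxe⟩ := mem_sup.mp hx
      obtain ⟨e₀, -, he₀⟩ := mem_image.mp (hedges e heF)
      obtain ⟨y, -, hy⟩ := mem_image.mp (he₀ ▸ mem_image_of_mem f hxe)
      exact Function.invFun_eq ⟨y, hy⟩
    refine ⟨Function.invFun ι ∘ f, fun x hx y hy hxy => hinj hx hy ?_, fun e heF => ?_⟩
    · rw [← hrange x hx, ← hrange y hy]
      exact congrArg ι hxy
    · obtain ⟨e₀, he₀H, he₀⟩ := mem_image.mp (hedges e heF)
      rwa [← image_image, ← he₀, image_image, Function.invFun_comp hι, image_id]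
  · rintro ⟨f, hinj, hedges⟩
    refine ⟨ι ∘ f, hι.comp_injOn hinj, fun e he => ?_⟩
    rw [← image_image]
    exact mem_image_of_mem _ (hedges e he)

theorem hFree_image_image_iff [Nonempty V] {ι : V → W} (hι : Function.Injective ι)
    {H : Finset (Finset V)} :
    HFree r Fam (H.image (image ι)) ↔ HFree r Fam H := by
  simp only [HFree, hContains_image_image_iff hι, forall_mem_image,
    card_image_of_injective _ hι]

theorem HConnected.hContains_or {F : Finset (Finset ℕ)} (hF : HConnected F) (p : V → Prop)
    {H₁ H₂ : Finset (Finset V)} (hne₁ : ∀ e ∈ H₁, e.Nonempty) (hne₂ : ∀ e ∈ H₂, e.Nonempty)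
    (hp₁ : ∀ e ∈ H₁, ∀ x ∈ e, p x) (hp₂ : ∀ e ∈ H₂, ∀ x ∈ e, ¬ p x)
    (hc : HContains F (H₁ ∪ H₂)) : HContains F H₁ ∨ HContains F H₂ := by
  obtain ⟨f, hinj, hedges⟩ := hc
  have hedge_ne : ∀ e ∈ F, e.Nonempty := fun e he =>
    image_nonempty.mp <| (mem_union.mp (hedges e he)).elim (hne₁ _) (hne₂ _)
  have hside : ∀ e ∈ F, ∀ x ∈ e, p (f x) → e.image f ∈ H₁ := fun e he x hx hpx =>
    (mem_union.mp (hedges e he)).resolve_right fun h => hp₂ _ h _ (mem_image_of_mem f hx) hpx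
  by_cases hx₀ : ∃ x₀ ∈ F.sup id, p (f x₀)
  · obtain ⟨x₀, hx₀F, hpx₀⟩ := hx₀
    have hall : ∀ v ∈ F.sup id, p (f v) := by
      intro v hv
      obtain hpath := hF x₀ hx₀F v hv
      clear hv
      induction hpath with
      | refl => exact hpx₀
      | tail _ hstep ih =>
        obtain ⟨e, he, hbe, hce⟩ := hstep
        exact hp₁ _ (hside e he _ hbe ih) _ (mem_image_of_mem f hce)
    refine Or.inl ⟨f, hinj, fun e he => ?_⟩
    obtain ⟨x, hx⟩ := hedge_ne e he
    exact hside e he x hx (hall x (mem_sup.mpr ⟨e, he, hx⟩))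
  · push Not at hx₀
    refine Or.inr ⟨f, hinj, fun e he => (mem_union.mp (hedges e he)).resolve_left fun h => ?_⟩
    obtain ⟨x, hx⟩ := hedge_ne e he
    exact hx₀ x (mem_sup.mpr ⟨e, he, hx⟩) (hp₁ _ h _ (mem_image_of_mem f hx))

theorem HFree.union (hr : 1 ≤ r)
    (hconn : ∀ F ∈ Fam, HConnected F) (p : V → Prop) {H₁ H₂ : Finset (Finset V)}
    (h₁ : HFree r Fam H₁) (h₂ : HFree r Fam H₂)
    (hp₁ : ∀ e ∈ H₁, ∀ x ∈ e, p x) (hp₂ : ∀ e ∈ H₂, ∀ x ∈ e, ¬ p x) :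
    HFree r Fam (H₁ ∪ H₂) := by
  refine ⟨fun e he => (mem_union.mp he).elim (h₁.1 e) (h₂.1 e), fun F hF hc => ?_⟩
  rcases (hconn F hF).hContains_or p (fun _ => h₁.nonempty_of_mem hr)
    (fun _ => h₂.nonempty_of_mem hr) hp₁ hp₂ hc with h | h
  exacts [h₁.2 F hF h, h₂.2 F hF h]

theorem exists_card_mul_card_filter_mem_le [Fintype V] [Nonempty V]
    {H : Finset (Finset V)} (hH : ∀ e ∈ H, #e = r) :
    ∃ v, Fintype.card V * #{e ∈ H | v ∈ e} ≤ r * #H := by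
  have hdeg : ∑ v, #{e ∈ H | v ∈ e} = r * #H := by
    have := sum_card_bipartiteAbove_eq_sum_card_bipartiteBelow (s := univ) (t := H)
      (r := fun v e => v ∈ e)
    simp only [bipartiteAbove, bipartiteBelow, filter_univ_mem] at this
    rw [this, sum_congr rfl hH, sum_const, smul_eq_mul, mul_comm]
  obtain ⟨v, -, hv⟩ := exists_le_of_sum_le (s := univ) univ_nonempty
    (f := fun v => Fintype.card V * #{e ∈ H | v ∈ e}) (g := fun _ => r * #H)
    (by rw [← mul_sum, hdeg, sum_const, card_univ, smul_eq_mul])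
  exact ⟨v, hv⟩

end Hypergraph

section Turan

variable {r : ℕ} {Fam : Set (Finset (Finset ℕ))}

theorem exH_eq_sSup (n : ℕ) :
    exH r Fam n = sSup {k | ∃ H : Finset (Finset (Fin n)), HFree r Fam H ∧ #H = k} := by
  simp only [exH, HFree, and_assoc]

theorem bddAbove_card_hFree (n : ℕ) :
    BddAbove {k | ∃ H : Finset (Finset (Fin n)), HFree r Fam H ∧ #H = k} := by
  refine ⟨#((univ : Finset (Fin n)).powersetCard r), ?_⟩
  rintro k ⟨H, hH, rfl⟩
  exact card_le_card fun e he => mem_powersetCard_univ.mpr (hH.1 e he)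

theorem HFree.card_le_exH {n : ℕ} {H : Finset (Finset (Fin n))} (hH : HFree r Fam H) :
    #H ≤ exH r Fam n :=
  (exH_eq_sSup n).symm ▸ le_csSup (bddAbove_card_hFree n) ⟨H, hH, rfl⟩

theorem exists_hFree_card_eq_exH (hFam : ∀ F ∈ Fam, F.Nonempty) (n : ℕ) :
    ∃ H : Finset (Finset (Fin n)), HFree r Fam H ∧ #H = exH r Fam n := by
  have hempty : HFree r Fam (∅ : Finset (Finset (Fin n))) := by
    refine ⟨by simp, ?_⟩
    rintro F hF ⟨f, -, hedges⟩
    obtain ⟨e, he⟩ := hFam F hF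
    exact notMem_empty _ (hedges e he)
  rw [exH_eq_sSup]
  refine Nat.sSup_mem ?_ (bddAbove_card_hFree n)
  exact ⟨0, ∅, hempty, rfl⟩

/-- The empty hypergraph embeds into everything with at least one vertex. -/
theorem exH_eq_zero_of_empty_mem (hFam : ∅ ∈ Fam) {n : ℕ} (hn : 0 < n) : exH r Fam n = 0 := by
  have hnone : ∀ H : Finset (Finset (Fin n)), ¬ HFree r Fam H :=
    fun _ hH => hH.2 ∅ hFam ⟨fun _ => ⟨0, hn⟩, by simp, by simp⟩
  simp [exH_eq_sSup, hnone]

theorem card_le_exH_of_subset_range {W : Type*} [DecidableEq W] {n : ℕ} [Nonempty (Fin n)]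
    {ι : Fin n → W} (hι : Function.Injective ι) {H : Finset (Finset W)} (hH : HFree r Fam H)
    (hrange : ∀ e ∈ H, ∀ x ∈ e, x ∈ Set.range ι) : #H ≤ exH r Fam n := by
  have hpull : (H.image (image (Function.invFun ι))).image (image ι) = H := by
    rw [image_image]
    refine (image_congr fun e he => ?_).trans image_id'
    rw [Function.comp_apply, image_image]
    exact (image_congr fun x hx => Function.invFun_eq (hrange e he x hx)).trans image_id'
  rw [← hpull] at hH ⊢
  rw [card_image_of_injective _ (image_injective hι)]
  exact ((hFree_image_image_iff hι).mp hH).card_le_exH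

/-- Deleting a vertex of minimum degree from an extremal `r`-graph on `n + 1` vertices. -/
theorem sub_mul_exH_succ_le (hr : 1 ≤ r) (hFam : ∀ F ∈ Fam, F.Nonempty) (n : ℕ) :
    (n + 1 - r) * exH r Fam (n + 1) ≤ (n + 1) * exH r Fam n := by
  rcases Nat.eq_zero_or_pos n with rfl | hn
  · simp [Nat.sub_eq_zero_of_le hr]
  have : Nonempty (Fin n) := ⟨⟨0, hn⟩⟩
  obtain ⟨H, hH, hcard⟩ := exists_hFree_card_eq_exH hFam (n + 1)
  obtain ⟨v, hv⟩ := exists_card_mul_card_filter_mem_le hH.1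
  rw [Fintype.card_fin] at hv
  have hrest : #{e ∈ H | v ∉ e} ≤ exH r Fam n :=
    card_le_exH_of_subset_range (Fin.succAbove_right_injective (p := v))
      (hH.mono (filter_subset _ _)) fun e he x hx =>
        Fin.exists_succAbove_eq fun hxv => (mem_filter.mp he).2 (hxv ▸ hx)
  have hsplit := card_filter_add_card_filter_not (s := H) (p := (v ∈ ·))
  rw [← hcard]
  calc (n + 1 - r) * #H = (n + 1) * #H - r * #H := Nat.sub_mul _ _ _
    _ ≤ (n + 1) * #H - (n + 1) * #{e ∈ H | v ∈ e} := Nat.sub_le_sub_left hv _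
    _ = (n + 1) * #{e ∈ H | v ∉ e} := by
      rw [← Nat.mul_sub, ← hsplit, Nat.add_sub_cancel_left]
    _ ≤ (n + 1) * exH r Fam n := Nat.mul_le_mul_left _ hrest

/-- The Katona–Nemetz–Simonovits averaging: `exH r Fam k / k.descFactorial r` is antitone. -/
theorem descFactorial_mul_exH_le (hr : 1 ≤ r) (hFam : ∀ F ∈ Fam, F.Nonempty) {k n : ℕ}
    (hkn : k ≤ n) : k.descFactorial r * exH r Fam n ≤ n.descFactorial r * exH r Fam k := by
  induction hkn using Nat.decreasingInduction with
  | self => exact le_rfl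
  | of_succ k _ ih =>
    refine Nat.le_of_mul_le_mul_left ?_ k.succ_pos
    calc (k + 1) * (k.descFactorial r * exH r Fam n)
        = (k + 1 - r) * ((k + 1).descFactorial r * exH r Fam n) := by
          rw [← mul_assoc, ← mul_assoc, Nat.succ_descFactorial]
      _ ≤ (k + 1 - r) * (n.descFactorial r * exH r Fam (k + 1)) := Nat.mul_le_mul_left _ ih
      _ = n.descFactorial r * ((k + 1 - r) * exH r Fam (k + 1)) := by ring
      _ ≤ n.descFactorial r * ((k + 1) * exH r Fam k) :=
          Nat.mul_le_mul_left _ (sub_mul_exH_succ_le hr hFam k)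
      _ = (k + 1) * (n.descFactorial r * exH r Fam k) := by ring

theorem sub_pow_mul_exH_le (hr : 1 ≤ r) (hFam : ∀ F ∈ Fam, F.Nonempty) {k n : ℕ}
    (hrk : r ≤ k) (hkn : k ≤ n) : (k - r) ^ r * exH r Fam n ≤ n ^ r * exH r Fam k := by
  have hpos : 0 < n.descFactorial r := Nat.descFactorial_pos.mpr (hrk.trans hkn)
  have hlow : (k - r) ^ r ≤ k.descFactorial r :=
    (Nat.pow_le_pow_left (by omega) r).trans (Nat.pow_sub_le_descFactorial k r)
  refine Nat.le_of_mul_le_mul_left ?_ hpos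
  calc n.descFactorial r * ((k - r) ^ r * exH r Fam n)
      ≤ n.descFactorial r * (k.descFactorial r * exH r Fam n) :=
        Nat.mul_le_mul_left _ (Nat.mul_le_mul_right _ hlow)
    _ ≤ n.descFactorial r * (n.descFactorial r * exH r Fam k) :=
        Nat.mul_le_mul_left _ (descFactorial_mul_exH_le hr hFam hkn)
    _ ≤ n.descFactorial r * (n ^ r * exH r Fam k) :=
        Nat.mul_le_mul_left _ (Nat.mul_le_mul_right _ (Nat.descFactorial_le_pow n r))

theorem exH_add_exH_le (hr : 1 ≤ r) (hconn : ∀ F ∈ Fam, HConnected F)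
    (hFam : ∀ F ∈ Fam, F.Nonempty) {a b : ℕ} (ha : 0 < a) (hb : 0 < b) :
    exH r Fam a + exH r Fam b ≤ exH r Fam (a + b) := by
  have : Nonempty (Fin a) := ⟨⟨0, ha⟩⟩
  have : Nonempty (Fin b) := ⟨⟨0, hb⟩⟩
  obtain ⟨H₁, hH₁, hcard₁⟩ := exists_hFree_card_eq_exH hFam a
  obtain ⟨H₂, hH₂, hcard₂⟩ := exists_hFree_card_eq_exH hFam b
  set K₁ := H₁.image (image (Fin.castAdd b))
  set K₂ := H₂.image (image (Fin.natAdd a))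
  have hK₁ : HFree r Fam K₁ := (hFree_image_image_iff (Fin.castAdd_injective a b)).mpr hH₁
  have hK₂ : HFree r Fam K₂ := (hFree_image_image_iff (Fin.natAdd_injective b a)).mpr hH₂
  have hside₁ : ∀ e ∈ K₁, ∀ x ∈ e, (x : ℕ) < a := by simp [K₁]
  have hside₂ : ∀ e ∈ K₂, ∀ x ∈ e, ¬ (x : ℕ) < a := by simp [K₂]
  have hdisj : Disjoint K₁ K₂ := disjoint_left.mpr fun e he₁ he₂ => by
    obtain ⟨x, hx⟩ := hK₁.nonempty_of_mem hr he₁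
    exact hside₂ e he₂ x hx (hside₁ e he₁ x hx)
  calc exH r Fam a + exH r Fam b = #(K₁ ∪ K₂) := by
        rw [card_union_of_disjoint hdisj, card_image_of_injective _ (image_injective
          (Fin.castAdd_injective a b)), card_image_of_injective _ (image_injective
          (Fin.natAdd_injective b a)), hcard₁, hcard₂]
    _ ≤ exH r Fam (a + b) := (hK₁.union hr hconn _ hK₂ hside₁ hside₂).card_le_exH

end Turan

theorem stmt0_general (r m n : ℕ) (Fam : Set (Finset (Finset ℕ)))
    (hr : 1 ≤ r) (hm : 1 ≤ m) (hnr : m + r ≤ n)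
    (hconn : ∀ F ∈ Fam, HConnected F) :
    (exH r Fam m : ℝ) ≤
      (1 - (((n : ℝ) - m - r) / n) ^ r) * exH r Fam n := by
  by_cases hempty : ∅ ∈ Fam
  · rw [exH_eq_zero_of_empty_mem hempty hm, exH_eq_zero_of_empty_mem hempty (by omega)]
    simp
  have hFam : ∀ F ∈ Fam, F.Nonempty := fun F hF =>
    nonempty_iff_ne_empty.mpr fun h => hempty (h ▸ hF)
  have hsplit : exH r Fam m + exH r Fam (n - m) ≤ exH r Fam n := by
    simpa [Nat.add_sub_cancel' (show m ≤ n by omega)] using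
      exH_add_exH_le hr hconn hFam hm (show 0 < n - m by omega)
  have hdel := sub_pow_mul_exH_le hr hFam (show r ≤ n - m by omega) (Nat.sub_le n m)
  have hn : (0 : ℝ) < n := by exact_mod_cast (show 0 < n by omega)
  have hsplitR : (exH r Fam m : ℝ) + exH r Fam (n - m) ≤ exH r Fam n := by exact_mod_cast hsplit
  have hdelR : (((n : ℝ) - m - r) / n) ^ r * exH r Fam n ≤ exH r Fam (n - m) := by
    rw [div_pow, div_mul_eq_mul_div, div_le_iff₀ (pow_pos hn r)]
    have := (Nat.cast_le (α := ℝ)).mpr hdel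
    push_cast [Nat.cast_sub (show r ≤ n - m by omega), Nat.cast_sub (show m ≤ n by omega)] at this
    linarith
  rw [sub_mul, one_mul]
  linarith

theorem stmt0 (r m n : ℕ) (Fam : Set (Finset (Finset ℕ)))
    (hr : 1 ≤ r) (hm : 1 ≤ m) (hmn : m ≤ n) (hnr : m + r ≤ n)
    (hunif : ∀ F ∈ Fam, ∀ e ∈ F, e.card = r)
    (hconn : ∀ F ∈ Fam, HConnected F) :
    (exH r Fam m : ℝ) ≤
      (1 - (((n : ℝ) - m - r) / n) ^ r) * exH r Fam n :=
  stmt0_general r m n Fam hr hm hnr hconn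
end

section
/- Let F be a bipartite graph containing a cycle. Then there exists a constant γ > 0 such that ex(n, F) = Ω(n^{1+γ}). -/
/-- `F` is contained in `G` as a subgraph. -/
def GContains {α β : Type*} (F : SimpleGraph α) (G : SimpleGraph β) : Prop :=
  ∃ f : α ↪ β, ∀ a b, F.Adj a b → G.Adj (f a) (f b)

/-- Turán number of `F` among graphs on `n` vertices. -/
noncomputable def exG {α : Type*} (F : SimpleGraph α) (n : ℕ) : ℕ :=
  sSup {k | ∃ G : SimpleGraph (Fin n), ¬ GContains F G ∧ G.edgeSet.ncard = k}

/-- Number of edges of a bipartite graph given as a relation between the two parts. -/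
noncomputable def bipCount {m n : ℕ} (B : Fin m → Fin n → Prop) : ℕ :=
  {p : Fin m × Fin n | B p.1 p.2}.ncard

/-- The bipartite graph `B` contains an ordered copy of the bipartite graph `R`. -/
def OrdContains {α β : Type*} (R : α → β → Prop) {m n : ℕ}
    (B : Fin m → Fin n → Prop) : Prop :=
  ∃ f : α ↪ Fin m, ∃ g : β ↪ Fin n, ∀ a b, R a b → B (f a) (g b)

/-- The Zarankiewicz number of an (ordered) bipartite graph `R`. -/
noncomputable def Zar {α β : Type*} (R : α → β → Prop) (m n : ℕ) : ℕ :=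
  sSup {k | ∃ B : Fin m → Fin n → Prop, ¬ OrdContains R B ∧ bipCount B = k}

/-- The bipartite graph (on `α ⊕ β`) associated with a relation `R : α → β → Prop`. -/
def sumGraph {α β : Type*} (R : α → β → Prop) : SimpleGraph (α ⊕ β) :=
  SimpleGraph.fromRel (fun x y => ∃ a b, x = Sum.inl a ∧ y = Sum.inr b ∧ R a b)

/-!
Erdős's deletion method. Colour the pairs of an `n`-set uniformly with `q` colours and keep the
pairs of colour `0`. For a graph `H` with `v` vertices and `e` edges, this graph has on average
`(n choose 2) / q` edges and at most `n ^ v / q ^ e` labelled copies of `H`; deleting one edge from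
each copy leaves an `H`-free graph, so `ex(n, H) ≥ (n choose 2) / q - n ^ v / q ^ e`. With
`q ≈ 8 n ^ β`, `β = (v - 2) / (e - 1)`, the right side is at least `n ^ (2 - β) / 100`.
A graph with a cycle contains a cycle graph `C_ℓ`, `ℓ ≥ 3`, for which `v = e = ℓ` and
`2 - β = 1 + 1 / (ℓ - 1)`.
-/

open Finset Fintype SimpleGraph

theorem card_filter_forall_mem_eq_zero_mul_pow {α : Type*} [Fintype α] [DecidableEq α]
    {q : ℕ} [NeZero q] (s : Finset α) :
    #{g : α → Fin q | ∀ a ∈ s, g a = 0} * q ^ #s = q ^ card α := by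
  have hpi : ({g : α → Fin q | ∀ a ∈ s, g a = 0} : Finset _) =
      piFinset fun a => if a ∈ s then {0} else univ := by
    ext g
    simp only [mem_filter_univ, mem_piFinset]
    refine forall_congr' fun a => ?_
    split_ifs <;> simp [*]
  rw [hpi, card_piFinset]
  simp only [apply_ite card, card_singleton, card_univ, Fintype.card_fin]
  rw [prod_ite, prod_const_one, one_mul, prod_const, ← pow_add, filter_not, filter_mem_eq_inter,
    univ_inter, card_sdiff_of_subset (subset_univ s), card_univ,
    Nat.sub_add_cancel (card_le_univ s)]

namespace SimpleGraph

variable {V W : Type*} {q : ℕ} [NeZero q]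

/-- Keeping the pairs of colour `0` of a uniformly random `q`-colouring of `Sym2 V` gives the random
graph `G(card V, 1 / q)`, so averages over all colourings are expectations. -/
def colorClassGraph (g : Sym2 V → Fin q) : SimpleGraph V := fromEdgeSet {e | g e = 0}

instance [DecidableEq V] (g : Sym2 V → Fin q) : DecidableRel (colorClassGraph g).Adj :=
  fun _ _ => decidable_of_iff' _ (fromEdgeSet_adj _)

theorem forall_adj_colorClassGraph_iff [Fintype W] {H : SimpleGraph W} [DecidableRel H.Adj]
    {f : W ↪ V} {g : Sym2 V → Fin q} :
    (∀ a b, H.Adj a b → (colorClassGraph g).Adj (f a) (f b)) ↔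
      ∀ e ∈ H.edgeFinset.map f.sym2Map, g e = 0 := by
  simp only [mem_map, mem_edgeFinset, forall_exists_index, and_imp, forall_apply_eq_imp_iff₂]
  constructor
  · intro h e he
    induction e using Sym2.inductionOn with
    | hf a b => exact ((fromEdgeSet_adj _).1 (h a b he)).1
  · intro h a b hab
    exact (fromEdgeSet_adj _).2 ⟨h s(a, b) hab, f.injective.ne hab.ne⟩

variable [Fintype V] [DecidableEq V]

theorem edgeFinset_colorClassGraph (g : Sym2 V → Fin q) :
    (colorClassGraph g).edgeFinset = {e ∈ (⊤ : SimpleGraph V).edgeFinset | g e = 0} := by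
  ext e
  rw [mem_edgeFinset]
  simp [colorClassGraph, and_comm]

theorem mul_sum_card_edgeFinset_colorClassGraph :
    q * ∑ g : Sym2 V → Fin q, #(colorClassGraph g).edgeFinset =
      (card V).choose 2 * q ^ card (Sym2 V) := by
  have hswap := sum_card_bipartiteAbove_eq_sum_card_bipartiteBelow
    (s := (univ : Finset (Sym2 V → Fin q))) (t := (⊤ : SimpleGraph V).edgeFinset)
    (fun g e => g e = 0)
  simp only [bipartiteAbove, bipartiteBelow] at hswap
  simp_rw [edgeFinset_colorClassGraph, hswap, mul_sum, ← card_edgeFinset_top_eq_card_choose_two,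
    ← smul_eq_mul, ← sum_const]
  refine sum_congr rfl fun e _ => ?_
  simpa [mul_comm] using card_filter_forall_mem_eq_zero_mul_pow (q := q) {e}

variable [Fintype W] [DecidableEq W]

theorem labelledCopyCount_eq_card_filter (G : SimpleGraph V) [DecidableRel G.Adj]
    (H : SimpleGraph W) [DecidableRel H.Adj] :
    G.labelledCopyCount H = #{f : W ↪ V | ∀ a b, H.Adj a b → G.Adj (f a) (f b)} := by
  let e : Copy H G ≃ {f : W ↪ V // ∀ a b, H.Adj a b → G.Adj (f a) (f b)} :=
    { toFun c := ⟨c.toEmbedding, fun _ _ h => c.toHom.map_adj h⟩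
      invFun f := ⟨⟨f.1, f.2 _ _⟩, f.1.injective⟩
      left_inv _ := rfl
      right_inv _ := rfl }
  classical
  rw [labelledCopyCount, ← Fintype.card_subtype]
  convert Fintype.card_congr e

theorem mul_sum_labelledCopyCount_colorClassGraph (H : SimpleGraph W) [DecidableRel H.Adj] :
    q ^ #H.edgeFinset * ∑ g : Sym2 V → Fin q, (colorClassGraph g).labelledCopyCount H =
      card (W ↪ V) * q ^ card (Sym2 V) := by
  have hswap := sum_card_bipartiteAbove_eq_sum_card_bipartiteBelow
    (s := (univ : Finset (Sym2 V → Fin q))) (t := (univ : Finset (W ↪ V)))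
    (fun g f => ∀ a b, H.Adj a b → (colorClassGraph g).Adj (f a) (f b))
  simp only [bipartiteAbove, bipartiteBelow] at hswap
  simp_rw [labelledCopyCount_eq_card_filter, hswap, mul_sum, forall_adj_colorClassGraph_iff]
  rw [← card_univ, ← smul_eq_mul, ← sum_const]
  refine sum_congr rfl fun f _ => ?_
  rw [mul_comm, ← card_map f.sym2Map, card_filter_forall_mem_eq_zero_mul_pow]

theorem choose_two_div_sub_pow_div_le_extremalNumber (H : SimpleGraph W) [DecidableRel H.Adj]
    (hH : H ≠ ⊥) :
    ((card V).choose 2 / q - card V ^ card W / q ^ #H.edgeFinset : ℝ) ≤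
      extremalNumber (card V) H := by
  classical
  set X : (Sym2 V → Fin q) → ℝ := fun g =>
    #(colorClassGraph g).edgeFinset - (colorClassGraph g).labelledCopyCount H
  have hq : (0 : ℝ) < q := by exact_mod_cast Nat.pos_of_neZero q
  have hmean : ∑ _g : Sym2 V → Fin q,
      ((card V).choose 2 / q - card V ^ card W / q ^ #H.edgeFinset : ℝ) ≤ ∑ g, X g := by
    have hE : ∑ g : Sym2 V → Fin q, (#(colorClassGraph g).edgeFinset : ℝ) =
        (card V).choose 2 * q ^ card (Sym2 V) / q := by
      rw [eq_div_iff hq.ne', mul_comm]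
      exact_mod_cast mul_sum_card_edgeFinset_colorClassGraph
    have hC : ∑ g : Sym2 V → Fin q, ((colorClassGraph g).labelledCopyCount H : ℝ) =
        card (W ↪ V) * q ^ card (Sym2 V) / q ^ #H.edgeFinset := by
      rw [eq_div_iff (by positivity), mul_comm]
      exact_mod_cast mul_sum_labelledCopyCount_colorClassGraph (V := V) H
    have hemb : (card (W ↪ V) : ℝ) ≤ card V ^ card W := by
      exact_mod_cast card_embedding_eq.trans_le (Nat.descFactorial_le_pow _ _)
    calc ∑ _g : Sym2 V → Fin q,
          ((card V).choose 2 / q - card V ^ card W / q ^ #H.edgeFinset : ℝ)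
        = (card V).choose 2 * q ^ card (Sym2 V) / q -
            card V ^ card W * q ^ card (Sym2 V) / q ^ #H.edgeFinset := by
          rw [sum_const, card_univ, Fintype.card_fun, Fintype.card_fin, nsmul_eq_mul]
          push_cast
          ring
      _ ≤ ∑ g, X g := by
          rw [sum_sub_distrib, hE, hC]
          gcongr
  obtain ⟨g, -, hg⟩ := exists_le_of_sum_le univ_nonempty hmean
  refine hg.trans ?_
  have hkill := (colorClassGraph g).le_card_edgeFinset_killCopies_add_copyCount (H := H)
  have hcount := (colorClassGraph g).copyCount_le_labelledCopyCount (H := H)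
  have hfree := card_edgeFinset_le_extremalNumber (free_killCopies (G := colorClassGraph g) hH)
  simp only [X, sub_le_iff_le_add]
  exact_mod_cast hkill.trans (Nat.add_le_add (by convert hfree) hcount)

end SimpleGraph

theorem exists_rpow_div_le_choose_two_div_sub_pow_div {v e n : ℕ} (hv : 2 ≤ v) (he : 2 ≤ e)
    (hn : 2 ≤ n) : ∃ q : ℕ, 0 < q ∧
      (n : ℝ) ^ (2 - ((v : ℝ) - 2) / ((e : ℝ) - 1)) / 100 ≤ n.choose 2 / q - n ^ v / q ^ e := by
  set β : ℝ := ((v : ℝ) - 2) / ((e : ℝ) - 1)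
  have hn1 : (1 : ℝ) ≤ n := by exact_mod_cast one_le_two.trans hn
  have hv2 : (2 : ℝ) ≤ v := by exact_mod_cast hv
  have he2 : (2 : ℝ) ≤ e := by exact_mod_cast he
  have he1 : (0 : ℝ) < e - 1 := by linarith
  have hβ : 0 ≤ β := div_nonneg (by linarith) he1.le
  set y : ℝ := (n : ℝ) ^ β
  set Z : ℝ := (n : ℝ) ^ (2 - β)
  have hy : 1 ≤ y := Real.one_le_rpow hn1 hβ
  have hZ : 0 ≤ Z := by positivity
  have hsq : (n : ℝ) ^ 2 = y * Z := by
    rw [← Real.rpow_add (by positivity), add_sub_cancel, Real.rpow_two]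
  have hpow : (n : ℝ) ^ v = y ^ e * Z := by
    rw [← Real.rpow_natCast y, ← Real.rpow_mul (by positivity), ← Real.rpow_add (by positivity),
      ← Real.rpow_natCast]
    congr 1
    simp only [β]
    field_simp
    ring
  -- `n ^ 2 = y * Z` and `n ^ v = y ^ e * Z`, so for `q ≈ 8 * y` the expected number of edges is
  -- at least `Z / 36` and the expected number of copies at most `Z / 64`.
  set q := ⌈8 * y⌉₊
  have hq8 : 8 * y ≤ q := Nat.le_ceil _
  have hq9 : (q : ℝ) ≤ 9 * y := by linarith [Nat.ceil_lt_add_one (by positivity : (0 : ℝ) ≤ 8 * y)]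
  have hq : (0 : ℝ) < q := by linarith
  refine ⟨q, by exact_mod_cast hq, ?_⟩
  have hchoose : Z / 36 ≤ n.choose 2 / q := by
    have : (n : ℝ) ^ 2 / 4 ≤ n.choose 2 := by
      rw [Nat.cast_choose_two]
      have : (2 : ℝ) ≤ n := by exact_mod_cast hn
      nlinarith
    rw [div_le_div_iff₀ (by norm_num) hq]
    nlinarith
  have hcopies : (n : ℝ) ^ v / q ^ e ≤ Z / 64 := by
    rw [div_le_div_iff₀ (by positivity) (by norm_num), hpow]
    have h64 : (64 : ℝ) ≤ 8 ^ e := by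
      calc (64 : ℝ) = 8 ^ 2 := by norm_num
        _ ≤ 8 ^ e := pow_le_pow_right₀ (by norm_num) he
    calc y ^ e * Z * 64 ≤ y ^ e * Z * 8 ^ e := by gcongr
      _ = Z * (8 * y) ^ e := by ring
      _ ≤ Z * q ^ e := by gcongr
  linarith

namespace SimpleGraph

theorem rpow_div_le_extremalNumber {W : Type*} [Fintype W] (H : SimpleGraph W)
    [DecidableRel H.Adj] (he : 2 ≤ #H.edgeFinset) {n : ℕ} (hn : 2 ≤ n) :
    (n : ℝ) ^ (2 - ((card W : ℝ) - 2) / ((#H.edgeFinset : ℝ) - 1)) / 100 ≤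
      extremalNumber n H := by
  classical
  have hv : 2 ≤ card W := by
    by_contra! hW
    have := H.card_edgeFinset_le_card_choose_two
    rw [Nat.choose_eq_zero_of_lt hW] at this
    omega
  have hH : H ≠ ⊥ := edgeFinset_nonempty.1 (card_pos.1 (by omega))
  obtain ⟨q, hq, hbound⟩ := exists_rpow_div_le_choose_two_div_sub_pow_div hv he hn
  have : NeZero q := ⟨hq.ne'⟩
  have := choose_two_div_sub_pow_div_le_extremalNumber (V := Fin n) (q := q) H hH
  rw [Fintype.card_fin] at this
  exact hbound.trans this

theorem Walk.IsCycle.cycleGraph_isContained {V : Type*} {G : SimpleGraph V} {u : V}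
    {c : G.Walk u u} (hc : c.IsCycle) : cycleGraph c.length ⊑ G := by
  obtain ⟨k, hk⟩ : ∃ k, c.length = k + 3 := ⟨c.length - 3, by have := hc.three_le_length; omega⟩
  have hadj (i : Fin (k + 3)) : G.Adj (c.getVert i) (c.getVert ↑(i + 1)) := by
    have := c.adj_getVert_succ (i := i) (by omega)
    rw [Fin.val_add_one]
    split_ifs with h
    · rw [show (i : ℕ) + 1 = c.length by simp [h, hk], c.getVert_length] at this
      rwa [c.getVert_zero]
    · exact this
  rw [hk]
  refine ⟨⟨⟨fun i => c.getVert i, fun {i j} h => ?_⟩, fun i j h => ?_⟩⟩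
  · rcases h with h | h <;> rw [sub_eq_iff_eq_add'] at h <;> subst h
    exacts [(hadj j).symm, hadj i]
  · exact Fin.ext (hc.getVert_injOn' (by simp; omega) (by simp; omega) h)

theorem card_edgeFinset_cycleGraph (k : ℕ) :
    #(cycleGraph (k + 3)).edgeFinset = k + 3 := by
  have hdeg (v : Fin (k + 3)) : (cycleGraph (k + 3)).degree v = 2 := by
    rw [← card_neighborFinset_eq_degree, cycleGraph_neighborFinset, card_pair]
    rw [Ne, sub_eq_iff_eq_add, add_assoc, left_eq_add, Fin.ext_iff]
    simp [Fin.val_add, Nat.mod_eq_of_lt (by omega : 2 < k + 3)]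
  have := sum_degrees_eq_twice_card_edges (cycleGraph (k + 3))
  simp only [hdeg, sum_const, card_univ, Fintype.card_fin, smul_eq_mul] at this
  omega

end SimpleGraph

theorem extremalNumber_le_exG {α : Type*} (F : SimpleGraph α) (n : ℕ) :
    extremalNumber n F ≤ exG F n := by
  classical
  have key := (extremalNumber_le_iff (V := Fin n) F (exG F n)).2 fun G _ hG => by
    refine le_csSup ⟨n.choose 2, ?_⟩ ⟨G, ?_, ?_⟩
    · rintro k ⟨G', -, rfl⟩
      rw [← coe_edgeFinset, Set.ncard_coe_finset]
      simpa using G'.card_edgeFinset_le_card_choose_two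
    · rintro ⟨f, hf⟩
      exact hG ⟨Hom.toCopy ⟨f, hf _ _⟩ f.injective⟩
    · rw [← coe_edgeFinset, Set.ncard_coe_finset]
  simpa using key

theorem stmt10_general {α : Type} (F : SimpleGraph α)
    (hcyc : ¬ F.IsAcyclic) :
    ∃ γ : ℝ, 0 < γ ∧ ∃ c : ℝ, 0 < c ∧ ∃ N : ℕ, ∀ n ≥ N,
      c * (n : ℝ) ^ (1 + γ) ≤ exG F n := by
  obtain ⟨u, c, hc⟩ : ∃ u, ∃ c : F.Walk u u, c.IsCycle := by simpa [IsAcyclic] using hcyc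
  obtain ⟨k, hk⟩ : ∃ k, c.length = k + 3 := ⟨c.length - 3, by have := hc.three_le_length; omega⟩
  refine ⟨1 / (k + 2), by positivity, 1 / 100, by norm_num, 2, fun n hn => ?_⟩
  have h := rpow_div_le_extremalNumber (cycleGraph (k + 3))
    (by rw [card_edgeFinset_cycleGraph]; omega) hn
  rw [card_edgeFinset_cycleGraph, Fintype.card_fin] at h
  have hexp : (2 - (((k + 3 : ℕ) : ℝ) - 2) / (((k + 3 : ℕ) : ℝ) - 1)) = 1 + 1 / (k + 2) := by
    push_cast
    rw [show (k : ℝ) + 3 - 1 = k + 2 by ring, show (k : ℝ) + 3 - 2 = k + 1 by ring]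
    field_simp
    ring
  rw [hexp] at h
  calc 1 / 100 * (n : ℝ) ^ (1 + 1 / (k + 2) : ℝ)
      = (n : ℝ) ^ (1 + 1 / (k + 2) : ℝ) / 100 := by ring
    _ ≤ extremalNumber n (cycleGraph (k + 3)) := h
    _ ≤ extremalNumber n F := by exact_mod_cast (hk ▸ hc.cycleGraph_isContained).extremalNumber_le
    _ ≤ exG F n := by exact_mod_cast extremalNumber_le_exG F n

theorem stmt10 {α : Type} [Fintype α] (F : SimpleGraph α)
    (hbip : ∃ c : α → Bool, ∀ a b, F.Adj a b → c a ≠ c b)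
    (hcyc : ¬ F.IsAcyclic) :
    ∃ γ : ℝ, 0 < γ ∧ ∃ c : ℝ, 0 < c ∧ ∃ N : ℕ, ∀ n ≥ N,
      c * (n : ℝ) ^ (1 + γ) ≤ exG F n :=
  stmt10_general F hcyc
end

section
/- Let m, n, s, t ≥ 1 be integers. Then Z(m, n, K_{s,t}) ≤ (t−1)^{1/s} m n^{1−1/s} + (s−1)n, where Z(m, n, K_{s,t}) is the maximum number of edges in a bipartite graph with parts of sizes m and n containing no copy of K_{s,t} with the s-side in the first part and the t-side in the second part. -/
open Finset

/-- Double counting: each `s`-subset of the first part is dominated by at most `t - 1`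
vertices of the second part. -/
lemma kst_core {m n s t : ℕ} (ht : 1 ≤ t) (B : Fin m → Fin n → Prop)
    [∀ i j, Decidable (B i j)]
    (hB : ¬ OrdContains (fun (_ : Fin s) (_ : Fin t) => True) B) :
    ∑ j : Fin n, ((univ.filter fun i => B i j).card.choose s)
      ≤ (t - 1) * m.choose s := by
  classical
  set N : Fin n → Finset (Fin m) := fun j => univ.filter fun i => B i j with hN
  have hpc : ∀ j, (N j).card.choose s
      = ((powersetCard s (univ : Finset (Fin m))).filter fun S => S ⊆ N j).card := by
    intro j
    rw [← Finset.card_powersetCard]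
    congr 1
    ext S
    simp only [mem_powersetCard, mem_filter, subset_univ, true_and]
    tauto
  calc ∑ j : Fin n, (N j).card.choose s
      = ∑ j : Fin n, ∑ S ∈ powersetCard s (univ : Finset (Fin m)),
          (if S ⊆ N j then 1 else 0) := by
        simp_rw [hpc, Finset.card_filter]
    _ = ∑ S ∈ powersetCard s (univ : Finset (Fin m)), ∑ j : Fin n,
          (if S ⊆ N j then 1 else 0) := Finset.sum_comm
    _ ≤ ∑ _S ∈ powersetCard s (univ : Finset (Fin m)), (t - 1) := by
        refine Finset.sum_le_sum fun S hS => ?_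
        rw [← Finset.card_filter]
        by_contra hlt
        push_neg at hlt
        have hcard : S.card = s := (mem_powersetCard.1 hS).2
        obtain ⟨T, hTsub, hTcard⟩ :=
          Finset.exists_subset_card_eq
            (s := univ.filter fun j => S ⊆ N j) (n := t) (by omega)
        apply hB
        have eS : Fin s ≃ {x // x ∈ S} := (finCongr hcard.symm).trans S.equivFin.symm
        have eT : Fin t ≃ {x // x ∈ T} := (finCongr hTcard.symm).trans T.equivFin.symm
        refine ⟨eS.toEmbedding.trans (Function.Embedding.subtype _),
          eT.toEmbedding.trans (Function.Embedding.subtype _), fun a b _ => ?_⟩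
        have hb : (eT b : Fin n) ∈ univ.filter fun j => S ⊆ N j := hTsub (eT b).2
        have hSb : S ⊆ N (eT b : Fin n) := (mem_filter.1 hb).2
        have := hSb (eS a).2
        simpa [hN] using this
    _ = (t - 1) * m.choose s := by
        rw [Finset.sum_const, Finset.card_powersetCard, card_univ, Fintype.card_fin,
          smul_eq_mul, mul_comm]

lemma bipCount_eq_sum {m n : ℕ} (B : Fin m → Fin n → Prop) [∀ i j, Decidable (B i j)] :
    bipCount B = ∑ j : Fin n, (univ.filter fun i => B i j).card := by
  rw [bipCount, show {p : Fin m × Fin n | B p.1 p.2}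
      = ↑(univ.filter fun p : Fin m × Fin n => B p.1 p.2) by ext p; simp,
    Set.ncard_coe_finset, Finset.card_filter]
  rw [Fintype.sum_prod_type, Finset.sum_comm]
  simp_rw [Finset.card_filter]

lemma kst_main {m n s t : ℕ} (hn : 1 ≤ n) (hs : 1 ≤ s) (ht : 1 ≤ t)
    (B : Fin m → Fin n → Prop)
    (hB : ¬ OrdContains (fun (_ : Fin s) (_ : Fin t) => True) B) :
    (bipCount B : ℝ) ≤
      ((t : ℝ) - 1) ^ ((1 : ℝ) / s) * m * (n : ℝ) ^ (1 - (1 : ℝ) / s) +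
        ((s : ℝ) - 1) * n := by
  classical
  set d : Fin n → ℕ := fun j => (univ.filter fun i => B i j).card with hd
  have H1 : ∑ j : Fin n, (d j).choose s ≤ (t - 1) * m.choose s := kst_core ht B hB
  have H2 : ∑ j : Fin n, (d j + 1 - s) ^ s ≤ (t - 1) * m ^ s := by
    calc ∑ j : Fin n, (d j + 1 - s) ^ s ≤ ∑ j : Fin n, (d j).descFactorial s :=
          Finset.sum_le_sum fun j _ => Nat.pow_sub_le_descFactorial _ _
      _ = ∑ j : Fin n, s.factorial * (d j).choose s := by
          simp_rw [Nat.descFactorial_eq_factorial_mul_choose]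
      _ = s.factorial * ∑ j : Fin n, (d j).choose s := by rw [Finset.mul_sum]
      _ ≤ s.factorial * ((t - 1) * m.choose s) := Nat.mul_le_mul_left _ H1
      _ = (t - 1) * (s.factorial * m.choose s) := by ring
      _ = (t - 1) * m.descFactorial s := by rw [Nat.descFactorial_eq_factorial_mul_choose]
      _ ≤ (t - 1) * m ^ s := Nat.mul_le_mul_left _ (Nat.descFactorial_le_pow _ _)
  have H3 : ∑ j : Fin n, d j ≤ (∑ j : Fin n, (d j + 1 - s)) + (s - 1) * n := by
    calc ∑ j : Fin n, d j ≤ ∑ j : Fin n, ((d j + 1 - s) + (s - 1)) :=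
          Finset.sum_le_sum fun j _ => by omega
      _ = (∑ j : Fin n, (d j + 1 - s)) + (s - 1) * n := by
          rw [Finset.sum_add_distrib, Finset.sum_const, card_univ, Fintype.card_fin,
            smul_eq_mul, mul_comm]
  set Y : ℝ := ∑ j : Fin n, ((d j + 1 - s : ℕ) : ℝ) with hYdef
  have hY0 : 0 ≤ Y := Finset.sum_nonneg fun j _ => Nat.cast_nonneg _
  have hts : (0 : ℝ) ≤ (t : ℝ) - 1 := by
    have : (1 : ℝ) ≤ t := by exact_mod_cast ht
    linarith
  have hs0 : (s : ℝ) ≠ 0 := Nat.cast_ne_zero.2 (by omega)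
  have hpow : Y ^ s ≤ ((t : ℝ) - 1) * ((m : ℝ) ^ s * (n : ℝ) ^ (s - 1)) := by
    obtain ⟨s', rfl⟩ : ∃ s', s = s' + 1 := ⟨s - 1, by omega⟩
    have hjen := pow_sum_div_card_le_sum_pow (s := (univ : Finset (Fin n)))
      (f := fun j => ((d j + 1 - (s' + 1) : ℕ) : ℝ)) (fun j _ => Nat.cast_nonneg _) s'
    rw [card_univ, Fintype.card_fin] at hjen
    have h2 : ∑ j : Fin n, ((d j + 1 - (s' + 1) : ℕ) : ℝ) ^ (s' + 1)
        ≤ ((t : ℝ) - 1) * (m : ℝ) ^ (s' + 1) := by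
      have hc := (Nat.cast_le (α := ℝ)).2 H2
      push_cast [Nat.cast_sub ht] at hc
      simp only [Nat.succ_sub_succ]
      exact hc
    have hn0 : (0 : ℝ) < (n : ℝ) ^ s' := by positivity
    rw [div_le_iff₀ hn0] at hjen
    calc Y ^ (s' + 1) ≤ (∑ j : Fin n, ((d j + 1 - (s' + 1) : ℕ) : ℝ) ^ (s' + 1))
          * (n : ℝ) ^ s' := hjen
      _ ≤ ((t : ℝ) - 1) * (m : ℝ) ^ (s' + 1) * (n : ℝ) ^ s' := by
          exact mul_le_mul_of_nonneg_right h2 (le_of_lt hn0)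
      _ = ((t : ℝ) - 1) * ((m : ℝ) ^ (s' + 1) * (n : ℝ) ^ (s' + 1 - 1)) := by
          rw [Nat.add_sub_cancel]; ring
  have hfin : Y ≤ ((t : ℝ) - 1) ^ ((1 : ℝ) / s) * m * (n : ℝ) ^ (1 - (1 : ℝ) / s) := by
    have key : Y = (Y ^ s) ^ ((1 : ℝ) / s) := by
      rw [← Real.rpow_natCast Y s, ← Real.rpow_mul hY0, mul_one_div_cancel hs0,
        Real.rpow_one]
    rw [key]
    have h1 : (Y ^ s) ^ ((1 : ℝ) / s)
        ≤ (((t : ℝ) - 1) * ((m : ℝ) ^ s * (n : ℝ) ^ (s - 1))) ^ ((1 : ℝ) / s) :=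
      Real.rpow_le_rpow (by positivity) hpow (by positivity)
    refine h1.trans_eq ?_
    rw [Real.mul_rpow hts (by positivity), Real.mul_rpow (by positivity) (by positivity),
      ← Real.rpow_natCast (m : ℝ) s, ← Real.rpow_mul (Nat.cast_nonneg m),
      mul_one_div_cancel hs0, Real.rpow_one,
      ← Real.rpow_natCast (n : ℝ) (s - 1), ← Real.rpow_mul (Nat.cast_nonneg n)]
    have hexp : ((s - 1 : ℕ) : ℝ) * ((1 : ℝ) / s) = 1 - (1 : ℝ) / s := by
      rw [Nat.cast_sub hs, Nat.cast_one, mul_one_div, sub_div, div_self hs0]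
    rw [hexp, mul_assoc]
  have Hb : (bipCount B : ℝ) ≤ Y + ((s : ℝ) - 1) * n := by
    rw [bipCount_eq_sum B]
    have hc := (Nat.cast_le (α := ℝ)).2 H3
    push_cast [Nat.cast_sub hs] at hc
    push_cast
    exact hc
  linarith

theorem stmt11 (m n s t : ℕ) (hm : 1 ≤ m) (hn : 1 ≤ n) (hs : 1 ≤ s) (ht : 1 ≤ t) :
    (Zar (fun (_ : Fin s) (_ : Fin t) => True) m n : ℝ) ≤
      ((t : ℝ) - 1) ^ ((1 : ℝ) / s) * m * (n : ℝ) ^ (1 - (1 : ℝ) / s) +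
        ((s : ℝ) - 1) * n := by
  classical
  set Sset := {k | ∃ B : Fin m → Fin n → Prop,
    ¬ OrdContains (fun (_ : Fin s) (_ : Fin t) => True) B ∧ bipCount B = k} with hS
  have hne : Sset.Nonempty := by
    refine ⟨bipCount (fun (_ : Fin m) (_ : Fin n) => False),
      fun (_ : Fin m) (_ : Fin n) => False, ?_, rfl⟩
    rintro ⟨f, g, h⟩
    exact h ⟨0, hs⟩ ⟨0, ht⟩ trivial
  have hbdd : BddAbove Sset := by
    refine ⟨m * n, fun k hk => ?_⟩
    obtain ⟨B, _, rfl⟩ := hk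
    calc bipCount B ≤ (Set.univ : Set (Fin m × Fin n)).ncard :=
          Set.ncard_le_ncard (Set.subset_univ _) Set.finite_univ
      _ = m * n := by simp [Set.ncard_univ]
  have hmem : Zar (fun (_ : Fin s) (_ : Fin t) => True) m n ∈ Sset :=
    Nat.sSup_mem hne hbdd
  obtain ⟨B, hB, hcount⟩ := hmem
  rw [← hcount]
  exact kst_main hn hs ht B hB
end

section
/- Let n, s, t ≥ 1 be integers with t ≥ s. Then ex(n, K_{s,t}) ≤ ((t−1)^{1/s}/2) n^{2−1/s} + ((s−1)/2) n. -/
open Finset SimpleGraph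

section KST

variable {n s t : ℕ}

private lemma common_nbrs_le (G : SimpleGraph (Fin n)) [DecidableRel G.Adj]
    (hG : ¬ GContains (completeBipartiteGraph (Fin s) (Fin t)) G)
    (S : Finset (Fin n)) (hS : S.card = s) :
    (univ.filter (fun v => S ⊆ G.neighborFinset v)).card ≤ t - 1 := by
  by_contra h
  push_neg at h
  have ht : t ≤ (univ.filter (fun v => S ⊆ G.neighborFinset v)).card := by omega
  obtain ⟨T, hTsub, hT⟩ := Finset.exists_subset_card_eq ht
  have hmem : ∀ v ∈ T, S ⊆ G.neighborFinset v := by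
    intro v hv
    exact (Finset.mem_filter.1 (hTsub hv)).2
  have hadj : ∀ a ∈ S, ∀ b ∈ T, G.Adj b a := by
    intro a ha b hb
    exact (SimpleGraph.mem_neighborFinset _ _ _).1 (hmem b hb ha)
  have hdisj : ∀ v, v ∈ S → v ∈ T → False := by
    intro v hvS hvT
    exact G.irrefl (hadj v hvS v hvT)
  apply hG
  have e1 : Fin s ≃ {x // x ∈ S} := (Fintype.equivFinOfCardEq (by simp [hS])).symm
  have e2 : Fin t ≃ {x // x ∈ T} := (Fintype.equivFinOfCardEq (by simp [hT])).symm
  refine ⟨⟨Sum.elim (fun a => (e1 a : Fin n)) (fun b => (e2 b : Fin n)), ?_⟩, ?_⟩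
  · rintro (a | a) (b | b) hab <;> simp only [Sum.elim_inl, Sum.elim_inr] at hab
    · exact congrArg Sum.inl (e1.injective (Subtype.ext hab))
    · exact (hdisj _ (e1 a).2 (hab ▸ (e2 b).2)).elim
    · exact (hdisj _ (e1 b).2 (hab ▸ (e2 a).2)).elim
    · exact congrArg Sum.inr (e2.injective (Subtype.ext hab))
  · rintro (a | a) (b | b) hab <;> simp at hab
    · exact (hadj _ (e1 a).2 _ (e2 b).2).symm
    · exact hadj _ (e1 b).2 _ (e2 a).2

private lemma sum_choose_le (G : SimpleGraph (Fin n)) [DecidableRel G.Adj]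
    (hc : ∀ S : Finset (Fin n), S.card = s →
      (univ.filter (fun v => S ⊆ G.neighborFinset v)).card ≤ t - 1) :
    ∑ v, (G.degree v).choose s ≤ (t - 1) * n.choose s := by
  have key : ∀ v : Fin n, (G.degree v).choose s
      = ∑ S ∈ (univ : Finset (Fin n)).powersetCard s,
          (if S ⊆ G.neighborFinset v then 1 else 0) := by
    intro v
    rw [← Finset.card_filter]
    rw [← SimpleGraph.card_neighborFinset_eq_degree, ← Finset.card_powersetCard]
    congr 1
    ext S
    simp only [mem_filter, mem_powersetCard, subset_univ, true_and, and_comm]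
  calc ∑ v, (G.degree v).choose s
      = ∑ v, ∑ S ∈ (univ : Finset (Fin n)).powersetCard s,
          (if S ⊆ G.neighborFinset v then 1 else 0) := by simp_rw [key]
    _ = ∑ S ∈ (univ : Finset (Fin n)).powersetCard s,
          (univ.filter (fun v => S ⊆ G.neighborFinset v)).card := by
        rw [Finset.sum_comm]
        refine Finset.sum_congr rfl fun S _ => ?_
        rw [Finset.card_filter]
    _ ≤ ∑ S ∈ (univ : Finset (Fin n)).powersetCard s, (t - 1) := by
        refine Finset.sum_le_sum fun S hS => hc S (mem_powersetCard.1 hS).2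
    _ = (t - 1) * n.choose s := by
        rw [Finset.sum_const, smul_eq_mul, Finset.card_powersetCard, card_univ,
          Fintype.card_fin, mul_comm]

private lemma main_bound (hn : 1 ≤ n) (hs : 1 ≤ s) (hst : s ≤ t)
    (G : SimpleGraph (Fin n)) [DecidableRel G.Adj]
    (hA : ∑ v, (G.degree v).choose s ≤ (t - 1) * n.choose s) :
    (G.edgeFinset.card : ℝ) ≤
      ((t : ℝ) - 1) ^ ((1 : ℝ) / s) / 2 * (n : ℝ) ^ (2 - (1 : ℝ) / s) +
        ((s : ℝ) - 1) / 2 * n := by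
  have hs0 : (s : ℝ) ≠ 0 := by positivity
  have ht1 : (0 : ℝ) ≤ (t : ℝ) - 1 := by
    have : (1 : ℝ) ≤ t := by exact_mod_cast hs.trans hst
    linarith
  set x : Fin n → ℕ := fun v => G.degree v + 1 - s with hxdef
  have hxs : ∑ v, (x v) ^ s ≤ (t - 1) * n ^ s := by
    calc ∑ v, (x v) ^ s ≤ ∑ v, (G.degree v).descFactorial s :=
          Finset.sum_le_sum fun v _ => Nat.pow_sub_le_descFactorial _ _
      _ = ∑ v, (Nat.factorial s) * (G.degree v).choose s := by
          simp_rw [Nat.descFactorial_eq_factorial_mul_choose]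
      _ = (Nat.factorial s) * ∑ v, (G.degree v).choose s := by rw [Finset.mul_sum]
      _ ≤ (Nat.factorial s) * ((t - 1) * n.choose s) := Nat.mul_le_mul_left _ hA
      _ = (t - 1) * ((Nat.factorial s) * n.choose s) := by ring
      _ = (t - 1) * n.descFactorial s := by
          rw [Nat.descFactorial_eq_factorial_mul_choose]
      _ ≤ (t - 1) * n ^ s := Nat.mul_le_mul_left _ (Nat.descFactorial_le_pow _ _)
  set X : ℕ := ∑ v, x v with hXdef
  have hpm : (X : ℝ) ^ s ≤ (n : ℝ) ^ (s - 1) * ((t - 1 : ℕ) * (n : ℝ) ^ s) := by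
    have h := pow_sum_le_card_mul_sum_pow (s := (univ : Finset (Fin n)))
      (f := fun v => (x v : ℝ)) (fun i _ => by positivity) (s - 1)
    rw [Nat.sub_add_cancel hs] at h
    have hcast : (X : ℝ) = ∑ v, (x v : ℝ) := by push_cast [hXdef]; rfl
    have hxs' : ∑ v, (x v : ℝ) ^ s ≤ (t - 1 : ℕ) * (n : ℝ) ^ s := by
      exact_mod_cast hxs
    calc (X : ℝ) ^ s = (∑ v, (x v : ℝ)) ^ s := by rw [hcast]
      _ ≤ (↑(univ : Finset (Fin n)).card) ^ (s - 1) * ∑ v, (x v : ℝ) ^ s := h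
      _ ≤ (n : ℝ) ^ (s - 1) * ((t - 1 : ℕ) * (n : ℝ) ^ s) := by
          simp only [card_univ, Fintype.card_fin]
          exact mul_le_mul_of_nonneg_left hxs' (by positivity)
  have htcast : ((t - 1 : ℕ) : ℝ) = (t : ℝ) - 1 := by
    have : 1 ≤ t := hs.trans hst
    push_cast [this]; ring
  have hXs : (X : ℝ) ^ (s : ℕ) ≤ ((t : ℝ) - 1) * (n : ℝ) ^ (2 * s - 1) := by
    calc (X : ℝ) ^ s ≤ (n : ℝ) ^ (s - 1) * ((t - 1 : ℕ) * (n : ℝ) ^ s) := hpm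
      _ = ((t - 1 : ℕ) : ℝ) * ((n:ℝ) ^ (s - 1) * (n:ℝ) ^ s) := by ring
      _ = ((t : ℝ) - 1) * (n : ℝ) ^ (2 * s - 1) := by
          rw [htcast, ← pow_add]
          congr 2
          omega
  have hXle : (X : ℝ) ≤ ((t : ℝ) - 1) ^ ((1:ℝ)/s) * (n : ℝ) ^ (2 - (1:ℝ)/s) := by
    have hXeq : (X : ℝ) = ((X : ℝ) ^ (s : ℕ)) ^ ((1:ℝ)/s) := by
      rw [← Real.rpow_natCast (X : ℝ) s, ← Real.rpow_mul (by positivity),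
        mul_one_div, div_self hs0, Real.rpow_one]
    rw [hXeq]
    calc ((X : ℝ) ^ (s : ℕ)) ^ ((1:ℝ)/s)
        ≤ (((t : ℝ) - 1) * (n : ℝ) ^ (2 * s - 1)) ^ ((1:ℝ)/s) :=
          Real.rpow_le_rpow (by positivity) hXs (by positivity)
      _ = ((t : ℝ) - 1) ^ ((1:ℝ)/s) * ((n : ℝ) ^ (2 * s - 1 : ℕ)) ^ ((1:ℝ)/s) :=
          Real.mul_rpow ht1 (by positivity)
      _ = ((t : ℝ) - 1) ^ ((1:ℝ)/s) * (n : ℝ) ^ (2 - (1:ℝ)/s) := by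
          rw [← Real.rpow_natCast (n : ℝ) (2 * s - 1), ← Real.rpow_mul (by positivity)]
          congr 1
          have h2s : 1 ≤ 2 * s := by omega
          have : ((2 * s - 1 : ℕ) : ℝ) = 2 * s - 1 := by push_cast [h2s]; ring
          rw [this]
          field_simp
  have hdeg : (2 * G.edgeFinset.card : ℝ) ≤ (X : ℝ) + ((s : ℝ) - 1) * n := by
    have h1 : ∀ v : Fin n, G.degree v ≤ x v + (s - 1) := fun v => by
      simp only [hxdef]; omega
    have h2 : ∑ v, G.degree v = 2 * G.edgeFinset.card :=
      G.sum_degrees_eq_twice_card_edges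
    have h3 : 2 * G.edgeFinset.card ≤ X + n * (s - 1) := by
      rw [← h2, hXdef]
      calc ∑ v, G.degree v ≤ ∑ v, (x v + (s - 1)) := Finset.sum_le_sum fun v _ => h1 v
        _ = (∑ v, x v) + n * (s - 1) := by
            rw [Finset.sum_add_distrib, Finset.sum_const, card_univ, Fintype.card_fin,
              smul_eq_mul]
    have h4 : ((n * (s - 1) : ℕ) : ℝ) ≤ ((s : ℝ) - 1) * n := by
      push_cast [hs]; ring_nf; exact le_refl _
    calc (2 * G.edgeFinset.card : ℝ) ≤ ((X + n * (s - 1) : ℕ) : ℝ) := by exact_mod_cast h3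
      _ = (X : ℝ) + ((n * (s - 1) : ℕ) : ℝ) := by push_cast; ring
      _ ≤ (X : ℝ) + ((s : ℝ) - 1) * n := by linarith
  linarith [hXle, hdeg]

end KST

theorem stmt12 (n s t : ℕ) (hn : 1 ≤ n) (hs : 1 ≤ s) (hst : s ≤ t) :
    (exG (completeBipartiteGraph (Fin s) (Fin t)) n : ℝ) ≤
      ((t : ℝ) - 1) ^ ((1 : ℝ) / s) / 2 * (n : ℝ) ^ (2 - (1 : ℝ) / s) +
        ((s : ℝ) - 1) / 2 * n := by
  set F := completeBipartiteGraph (Fin s) (Fin t)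
  set 𝒮 := {k | ∃ G : SimpleGraph (Fin n), ¬ GContains F G ∧ G.edgeSet.ncard = k}
    with h𝒮
  have hne : 𝒮.Nonempty := by
    refine ⟨(⊥ : SimpleGraph (Fin n)).edgeSet.ncard, ⊥, ?_, rfl⟩
    rintro ⟨f, hf⟩
    have : F.Adj (Sum.inl ⟨0, hs⟩) (Sum.inr ⟨0, hs.trans hst⟩) := by
      simp [F]
    exact hf _ _ this
  have hbdd : BddAbove 𝒮 := by
    refine ⟨Nat.card (Sym2 (Fin n)), ?_⟩
    rintro k ⟨G, -, rfl⟩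
    rw [← Set.ncard_univ]
    exact Set.ncard_le_ncard (Set.subset_univ _) Set.finite_univ
  obtain ⟨G, hG, hcard⟩ := Nat.sSup_mem hne hbdd
  letI : DecidableRel G.Adj := Classical.decRel _
  have hcard' : exG F n = G.edgeFinset.card := by
    rw [exG, ← h𝒮, ← hcard, Set.ncard_eq_toFinset_card', SimpleGraph.edgeFinset]
  rw [hcard']
  exact main_bound hn hs hst G (sum_choose_le G (common_nbrs_le G hG))
end
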